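/- Let n ≥ 2, d ≥ 3, and let f = x_1^d + ⋯ + x_n^d be the Fermat polynomial. Suppose g ∈ ℂ[x_1,…,x_n] is a smooth homogeneous polynomial of degree d whose Jacobian ideal equals that of f, i.e. J(g) = J(f) = (x_1^{d−1},…,x_n^{d−1}), and whose Hessian satisfies H(g) = α·(x_1⋯x_n)^{d−2} for some α ∈ ℂ. Then g = β_1x_1^d + ⋯ + β_nx_n^d for some constants β_i ∈ ℂ. -/

import Mathlib

open MvPolynomial

/-! Every `∂ᵢg` lies in the monomial ideal `(x_1^{d-1},…,x_n^{d-1})`, so for every monomial `x^m`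
of `g` and every `i` with `mᵢ > 0` the monomial `x^{m - eᵢ}` of `∂ᵢg` is divisible by some
`x_j^{d-1}`. Since `|m| = d`, either `m = d·e_j`, or `m_j = d - 1` and `m` has a second nonzero
entry; in the latter case `x^{m - e_j}` has `j`-exponent `d - 2` and its other exponents sum to
`1`, so it is divisible by no `x_k^{d-1}` once `d ≥ 3`. Hence `g` is a sum of pure powers. -/

/-- The Hessian determinant of a multivariate polynomial. -/
noncomputable def hessDet {n : ℕ} (f : MvPolynomial (Fin n) ℂ) : MvPolynomial (Fin n) ℂ :=
  Matrix.det (Matrix.of fun i j => pderiv i (pderiv j f))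

namespace Finsupp

variable {σ : Type*}

theorem degree_eq_apply_add_degree_erase {R : Type*} [AddCommMonoid R] (m : σ →₀ R) (i : σ) :
    m.degree = m i + (m.erase i).degree := by
  conv_lhs => rw [← single_add_erase i m]
  rw [map_add, degree_single]

theorem eq_single_of_degree_le_apply {m : σ →₀ ℕ} {j : σ} (h : m.degree ≤ m j) :
    m = single j (m j) := by
  have hdeg := degree_eq_apply_add_degree_erase m j
  have herase : m.erase j = 0 := (degree_eq_zero_iff _).mp (by omega)
  rw [← single_add_erase j m, herase, add_zero, single_eq_same]

theorem apply_add_apply_le_degree (m : σ →₀ ℕ) {i j : σ} (hij : i ≠ j) :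
    m i + m j ≤ m.degree := by
  have hj : (m.erase i) j ≤ (m.erase i).degree := le_degree j _
  rw [erase_ne hij.symm] at hj
  rw [degree_eq_apply_add_degree_erase m i]
  omega

theorem exists_eq_single_of_single_le_sub_single {m : σ →₀ ℕ} {d : ℕ} (hm : m.degree = d)
    (hd : 3 ≤ d) (h : ∀ i, m i ≠ 0 → ∃ j, single j (d - 1) ≤ m - single i 1) :
    ∃ j, m = single j d := by
  have hle_apply {i j : σ} (hij : single j (d - 1) ≤ m - single i 1) : d - 1 ≤ m j :=
    (single_le_iff.mp hij).trans tsub_le_self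
  obtain ⟨i, hi⟩ : ∃ i, m i ≠ 0 :=
    ne_iff.mp ((degree_eq_zero_iff m).not.mp (by omega))
  obtain ⟨j, hj⟩ := h i hi
  have hmj := hle_apply hj
  have hmj_le : m j ≤ d := hm ▸ le_degree j m
  by_cases hmj_eq : m j = d
  · exact ⟨j, hmj_eq ▸ eq_single_of_degree_le_apply (by omega)⟩
  · exfalso
    obtain ⟨k, hk⟩ := h j (by omega)
    by_cases hjk : j = k
    · subst hjk
      have hmj' : d - 1 ≤ m j - 1 := by simpa only [single_le_iff, tsub_apply, single_eq_same] using hk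
      omega
    · have hsum := apply_add_apply_le_degree m hjk
      have hmk := hle_apply hk
      omega

end Finsupp

namespace MvPolynomial

variable {σ R : Type*} [CommSemiring R]

theorem exists_single_le_of_mem_span_X_pow {p : MvPolynomial σ R} {k : ℕ}
    (hp : p ∈ Ideal.span (Set.range fun j => (X j : MvPolynomial σ R) ^ k))
    {m : σ →₀ ℕ} (hm : m ∈ p.support) : ∃ j, Finsupp.single j k ≤ m := by
  have hrange : (Set.range fun j => (X j : MvPolynomial σ R) ^ k) =
      (fun s => monomial s (1 : R)) '' Set.range fun j => Finsupp.single j k := by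
    rw [← Set.range_comp]
    simp only [Function.comp_def, X_pow_eq_monomial]
  rw [hrange, mem_ideal_span_monomial_image] at hp
  obtain ⟨_, ⟨j, rfl⟩, hj⟩ := hp m hm
  exact ⟨j, hj⟩

theorem sub_single_one_mem_support_pderiv [NoZeroDivisors R] [CharZero R]
    {p : MvPolynomial σ R} {m : σ →₀ ℕ} (hm : m ∈ p.support) {i : σ} (hi : m i ≠ 0) :
    m - Finsupp.single i 1 ∈ (pderiv i p).support := by
  have hcancel : m - Finsupp.single i 1 + Finsupp.single i 1 = m :=
    tsub_add_cancel_of_le (Finsupp.single_le_iff.mpr (Nat.one_le_iff_ne_zero.mpr hi))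
  rw [mem_support_iff, coeff_pderiv, hcancel]
  exact mul_ne_zero (mem_support_iff.mp hm) (Nat.cast_add_one_ne_zero _)

theorem eq_sum_C_mul_X_pow_of_forall_mem_support {p : MvPolynomial σ R} [Fintype σ] [DecidableEq σ]
    {d : ℕ} (hd : d ≠ 0) (h : ∀ m ∈ p.support, ∃ i, m = Finsupp.single i d) :
    p = ∑ i, C (coeff (Finsupp.single i d) p) * X i ^ d := by
  have hsupp : p.support ⊆ Finset.univ.image fun i => Finsupp.single i d := by
    intro m hm
    obtain ⟨i, rfl⟩ := h m hm
    exact Finset.mem_image_of_mem _ (Finset.mem_univ i)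
  conv_lhs => rw [p.as_sum]
  rw [Finset.sum_subset hsupp fun m _ hm => by rw [notMem_support_iff.mp hm, monomial_zero],
    Finset.sum_image fun i _ j _ hij => Finsupp.single_left_injective hd hij]
  simp only [C_mul_X_pow_eq_monomial]

theorem IsHomogeneous.exists_eq_single_of_pderiv_mem_span_X_pow [NoZeroDivisors R] [CharZero R]
    {g : MvPolynomial σ R} {d : ℕ} (hg : g.IsHomogeneous d) (hd : 3 ≤ d)
    (hJ : ∀ i, pderiv i g ∈ Ideal.span (Set.range fun j => (X j : MvPolynomial σ R) ^ (d - 1)))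
    {m : σ →₀ ℕ} (hm : m ∈ g.support) : ∃ j, m = Finsupp.single j d :=
  Finsupp.exists_eq_single_of_single_le_sub_single
    (by rw [Finsupp.degree_eq_weight_one]; exact hg (mem_support_iff.mp hm)) hd
    fun i hi => exists_single_le_of_mem_span_X_pow (hJ i) (sub_single_one_mem_support_pderiv hm hi)

end MvPolynomial

theorem same_jacobian_as_fermat (n d : ℕ) (hd : 3 ≤ d)
    (g : MvPolynomial (Fin n) ℂ) (hhom : g.IsHomogeneous d)
    (hJ : Ideal.span (Set.range fun i => pderiv i g) =
          Ideal.span (Set.range fun i : Fin n => X i ^ (d - 1))) :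
    ∃ β : Fin n → ℂ, g = ∑ i : Fin n, C (β i) * X i ^ d := by
  have hpderiv_mem (i : Fin n) :
      pderiv i g ∈ Ideal.span (Set.range fun j : Fin n => X j ^ (d - 1)) :=
    hJ ▸ Ideal.subset_span ⟨i, rfl⟩
  exact ⟨_, eq_sum_C_mul_X_pow_of_forall_mem_support (by omega)
    fun _ hm => hhom.exists_eq_single_of_pderiv_mem_span_X_pow hd hpderiv_mem hm⟩
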